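/- arXiv:1301.2883 — 2 statements merged into one kernel-verified Lean document; each statement's English description precedes it below -/
import Mathlib

section
/- Let H ∈ (0,1), T > 0, and let σ²_{S^H}(s,t) = |t−s|^{2H} + (s+t)^{2H} − 2^{2H−1}(t^{2H} + s^{2H}) be the incremental variance of sub-fractional Brownian motion. For every φ ∈ Ψ and every δ > 0 with 0 < φ(δ) ≤ T − δ, one has sup_{φ(δ)≤s≤T−δ} sup_{0<h≤δ} |σ²_{S^H}(s,s+h)/h^{2H} − 1| ≤ 2^{2H−1} (δ/φ(δ))^{2−2H} = 2^{2H−1}/(L(δ))^{2−2H}, where L(δ) = φ(δ)/δ. In particular the sub-fractional Brownian motion satisfies condition (C2) with κ = 1 and exponent γ = H. -/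
/-!
Since `s + (s + h) = 2 (s + h/2)`, the incremental variance is
`σ²(s, s + h) = h^{2H} - 2^{2H-1} (s^{2H} + (s + h)^{2H} - 2 (s + h/2)^{2H})`.
The bracket is a midpoint second difference of `x ↦ x^{2H}`, whose second derivative is bounded
by `2 s^{2H-2}` on `[s, ∞)`; the mean value theorem, applied twice, bounds it by `h² s^{2H-2}`.
Dividing by `h^{2H}` gives the bound `2^{2H-1} (h/s)^{2-2H} ≤ 2^{2H-1} (δ/φ(δ))^{2-2H}`.
-/

open Real Set Filter

/-- The class Ψ of continuous functions `φ : (0,T] → [0,∞)` with `φ(h) → 0`,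
`L(h) = φ(h)/h → ∞` and `h·L(h)³ → 0` as `h ↓ 0`. -/
def MemPsi (T : ℝ) (φ : ℝ → ℝ) : Prop :=
  ContinuousOn φ (Ioc 0 T) ∧ (∀ h ∈ Ioc (0:ℝ) T, 0 ≤ φ h) ∧
  Tendsto φ (nhdsWithin 0 (Ioi 0)) (nhds 0) ∧
  Tendsto (fun h => φ h / h) (nhdsWithin 0 (Ioi 0)) atTop ∧
  Tendsto (fun h => h * (φ h / h) ^ 3) (nhdsWithin 0 (Ioi 0)) (nhds 0)

/-- Incremental variance of the sub-fractional Brownian motion with index `H`. -/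
noncomputable def sigma2subfBm (H s t : ℝ) : ℝ :=
  |t - s| ^ (2*H) + (s + t) ^ (2*H) - 2 ^ (2*H - 1) * (t ^ (2*H) + s ^ (2*H))

theorem abs_add_sub_two_mul_midpoint_le {f f' : ℝ → ℝ} {a h K : ℝ} (hh : 0 ≤ h)
    (hf : ∀ x ∈ Icc a (a + h), HasDerivAt f (f' x) x)
    (hf' : ∀ x ∈ Icc a (a + h), ∀ y ∈ Icc a (a + h), |f' y - f' x| ≤ K * |y - x|) :
    |f a + f (a + h) - 2 * f (a + h / 2)| ≤ K * h ^ 2 / 2 := by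
  rcases hh.eq_or_lt with rfl | hh
  · norm_num [two_mul]
  have hK : 0 ≤ K := by
    have := hf' a (left_mem_Icc.2 (by linarith)) (a + h) (right_mem_Icc.2 (by linarith))
    rw [add_sub_cancel_left, abs_of_pos hh] at this
    exact nonneg_of_mul_nonneg_left ((abs_nonneg _).trans this) hh
  have mem₁ : ∀ u ∈ Icc 0 h, a + u ∈ Icc a (a + h) := fun u hu =>
    ⟨by linarith [hu.1], by linarith [hu.2]⟩
  have mem₂ : ∀ u ∈ Icc 0 h, a + u / 2 ∈ Icc a (a + h) := fun u hu =>
    ⟨by linarith [hu.1], by linarith [hu.1, hu.2]⟩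
  let E : ℝ → ℝ := fun u => f a + f (a + u) - 2 * f (a + u / 2)
  have hE : ∀ u ∈ Icc 0 h, HasDerivWithinAt E (f' (a + u) - f' (a + u / 2)) (Icc 0 h) u := by
    intro u hu
    have h₁ : HasDerivAt (fun u => f (a + u)) (f' (a + u)) u :=
      (hf _ (mem₁ u hu)).comp_const_add a u
    have h₂ : HasDerivAt (fun u => f (a + u / 2)) (f' (a + u / 2) * (1 / 2)) u :=
      (hf _ (mem₂ u hu)).comp u (by simpa using ((hasDerivAt_id u).div_const 2).const_add a)
    refine (((h₁.const_add (f a)).sub (h₂.const_mul 2)).congr_deriv ?_).hasDerivWithinAt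
    ring
  have hE' : ∀ u ∈ Icc 0 h, ‖f' (a + u) - f' (a + u / 2)‖ ≤ K * (h / 2) := by
    intro u hu
    calc ‖f' (a + u) - f' (a + u / 2)‖ ≤ K * |a + u - (a + u / 2)| :=
          hf' _ (mem₂ u hu) _ (mem₁ u hu)
      _ = K * (u / 2) := by
          rw [show a + u - (a + u / 2) = u / 2 by ring, abs_of_nonneg (by linarith [hu.1])]
      _ ≤ K * (h / 2) := by gcongr; exact hu.2
  have := (convex_Icc 0 h).norm_image_sub_le_of_norm_hasDerivWithin_le hE hE'
    (left_mem_Icc.2 hh.le) (right_mem_Icc.2 hh.le)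
  calc |f a + f (a + h) - 2 * f (a + h / 2)| = ‖E h - E 0‖ := by
        simp only [E, add_zero, zero_div, norm_eq_abs]; ring_nf
    _ ≤ K * (h / 2) * ‖h - 0‖ := this
    _ = K * h ^ 2 / 2 := by rw [sub_zero, norm_of_nonneg hh.le]; ring

theorem abs_deriv_rpow_sub_le {p s x y : ℝ} (hp : p ≤ 2) (hs : 0 < s) (hx : s ≤ x) (hy : s ≤ y) :
    |p * y ^ (p - 1) - p * x ^ (p - 1)| ≤ |p * (p - 1)| * s ^ (p - 2) * |y - x| := by
  have hderiv : ∀ z ∈ Ici s, HasDerivWithinAt (fun z => p * z ^ (p - 1))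
      (p * ((p - 1) * z ^ (p - 1 - 1))) (Ici s) z := fun z hz =>
    ((hasDerivAt_rpow_const (Or.inl (hs.trans_le hz).ne')).const_mul p).hasDerivWithinAt
  have hbound : ∀ z ∈ Ici s, ‖p * ((p - 1) * z ^ (p - 1 - 1))‖ ≤ |p * (p - 1)| * s ^ (p - 2) := by
    intro z hz
    rw [show p - 1 - 1 = p - 2 by ring, ← mul_assoc, norm_mul, norm_eq_abs, norm_eq_abs,
      abs_of_pos (rpow_pos_of_pos (hs.trans_le hz) _)]
    exact mul_le_mul_of_nonneg_left (rpow_le_rpow_of_nonpos hs hz (by linarith)) (abs_nonneg _)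
  simpa only [norm_eq_abs] using
    (convex_Ici s).norm_image_sub_le_of_norm_hasDerivWithin_le hderiv hbound hx hy

theorem abs_rpow_add_sub_two_mul_midpoint_le {p s h : ℝ} (hp : p ≤ 2) (hs : 0 < s) (hh : 0 ≤ h) :
    |s ^ p + (s + h) ^ p - 2 * (s + h / 2) ^ p| ≤ |p * (p - 1)| * s ^ (p - 2) * h ^ 2 / 2 :=
  abs_add_sub_two_mul_midpoint_le hh
    (fun _ hx => hasDerivAt_rpow_const (Or.inl (hs.trans_le hx.1).ne'))
    (fun _ hx _ hy => abs_deriv_rpow_sub_le hp hs hx.1 hy.1)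

theorem sigma2subfBm_self_add (H : ℝ) {s h : ℝ} (hs : 0 ≤ s) (hh : 0 ≤ h) :
    sigma2subfBm H s (s + h)
      = h ^ (2*H) - 2 ^ (2*H - 1) * (s ^ (2*H) + (s + h) ^ (2*H) - 2 * (s + h / 2) ^ (2*H)) := by
  have hsum : (s + (s + h)) ^ (2*H) = 2 ^ (2*H - 1) * 2 * (s + h / 2) ^ (2*H) := by
    rw [show s + (s + h) = 2 * (s + h / 2) by ring, mul_rpow zero_le_two (by positivity),
      ← rpow_add_one two_ne_zero, sub_add_cancel]
  rw [sigma2subfBm, add_sub_cancel_left, abs_of_nonneg hh, hsum]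
  ring

theorem abs_sigma2subfBm_div_sub_one_le {H s h : ℝ} (hH : H ∈ Icc 0 1) (hs : 0 < s) (hh : 0 < h) :
    |sigma2subfBm H s (s + h) / h ^ (2*H) - 1| ≤ 2 ^ (2*H - 1) * (h / s) ^ (2 - 2*H) := by
  obtain ⟨hH0, hH1⟩ := hH
  have hhp : 0 < h ^ (2*H) := rpow_pos_of_pos hh _
  have hcoef : |2*H * (2*H - 1)| ≤ 2 := by
    rw [abs_le]; constructor <;> nlinarith
  have hscale : s ^ (2*H - 2) * h ^ 2 / h ^ (2*H) = (h / s) ^ (2 - 2*H) := by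
    have hh' : h ^ (2 - 2*H) = h ^ 2 / h ^ (2*H) := by rw [rpow_sub hh, rpow_two]
    have hs' : s ^ (2*H - 2) = (s ^ (2 - 2*H))⁻¹ := by rw [← rpow_neg hs.le, neg_sub]
    rw [div_rpow hh.le hs.le, hh', hs']
    ring
  set D := s ^ (2*H) + (s + h) ^ (2*H) - 2 * (s + h / 2) ^ (2*H)
  have hD : |D| ≤ s ^ (2*H - 2) * h ^ 2 := by
    calc |D| ≤ |2*H * (2*H - 1)| * s ^ (2*H - 2) * h ^ 2 / 2 :=
          abs_rpow_add_sub_two_mul_midpoint_le (by linarith) hs hh.le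
      _ ≤ 2 * s ^ (2*H - 2) * h ^ 2 / 2 := by gcongr
      _ = s ^ (2*H - 2) * h ^ 2 := by ring
  calc |sigma2subfBm H s (s + h) / h ^ (2*H) - 1|
      = 2 ^ (2*H - 1) * (|D| / h ^ (2*H)) := by
        rw [sigma2subfBm_self_add H hs.le hh.le, sub_div, div_self hhp.ne', sub_sub_cancel_left,
          abs_neg, mul_div_assoc, abs_mul, abs_div, abs_of_pos hhp, abs_of_pos (by positivity)]
    _ ≤ 2 ^ (2*H - 1) * (s ^ (2*H - 2) * h ^ 2 / h ^ (2*H)) := by gcongr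
    _ = 2 ^ (2*H - 1) * (h / s) ^ (2 - 2*H) := by rw [hscale]

theorem subfBm_C2_bound_general (H T : ℝ) (hH : H ∈ Set.Ioo (0:ℝ) 1)
    (φ : ℝ → ℝ) (δ : ℝ) (hδ : 0 < δ)
    (hφδ : 0 < φ δ) :
    (⨆ s ∈ Icc (φ δ) (T - δ), ⨆ h ∈ Ioc (0:ℝ) δ,
        |sigma2subfBm H s (s + h) / h ^ (2*H) - 1|)
      ≤ 2 ^ (2*H - 1) * (δ / φ δ) ^ (2 - 2*H) := by
  have hR : 0 ≤ 2 ^ (2*H - 1) * (δ / φ δ) ^ (2 - 2*H) := by positivity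
  refine Real.iSup_le (fun s => Real.iSup_le (fun hs => Real.iSup_le (fun h =>
    Real.iSup_le (fun hh => ?_) hR) hR) hR) hR
  have hs0 : 0 < s := hφδ.trans_le hs.1
  calc |sigma2subfBm H s (s + h) / h ^ (2*H) - 1|
      ≤ 2 ^ (2*H - 1) * (h / s) ^ (2 - 2*H) :=
        abs_sigma2subfBm_div_sub_one_le (Ioo_subset_Icc_self hH) hs0 hh.1
    _ ≤ 2 ^ (2*H - 1) * (δ / φ δ) ^ (2 - 2*H) := by
        gcongr 2 ^ (2*H - 1) * ?_
        exact rpow_le_rpow (div_pos hh.1 hs0).le (div_le_div₀ hδ.le hh.2 hφδ hs.1)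
          (by linarith [hH.2])

/-- Quantitative form of condition (C2) (with `κ = 1`, `γ = H`)
for the sub-fractional Brownian motion. -/
theorem subfBm_C2_bound (H T : ℝ) (hH : H ∈ Set.Ioo (0:ℝ) 1) (hT : 0 < T)
    (φ : ℝ → ℝ) (hφ : MemPsi T φ) (δ : ℝ) (hδ : 0 < δ)
    (hφδ : 0 < φ δ) (hφδT : φ δ ≤ T - δ) :
    (⨆ s ∈ Icc (φ δ) (T - δ), ⨆ h ∈ Ioc (0:ℝ) δ,
        |sigma2subfBm H s (s + h) / h ^ (2*H) - 1|)
      ≤ 2 ^ (2*H - 1) * (δ / φ δ) ^ (2 - 2*H) :=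
  subfBm_C2_bound_general H T hH φ δ hδ hφδ
end

section
/- Let H ∈ (1/2,1), T > 0, and let σ²_{S^H}(s,t) = |t−s|^{2H} + (s+t)^{2H} − 2^{2H−1}(t^{2H} + s^{2H}) be the incremental variance of sub-fractional Brownian motion. Then for every δ with 0 < δ ≤ T/2, sup_{0≤s≤T−δ} sup_{0<h≤δ} h^{−2H} |σ²_{S^H}(s,s+h) − h^{2H}| ≥ H(2H−1)(2^{2H−1}−1) 3^{2H−2}. Consequently, in condition (C2) for the sub-fractional Brownian motion the lower cutoff φ(δ) cannot be replaced by 0. -/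
open Real Set Filter

/-!
Put `u = 2H ∈ (1, 2)`. Then
`h ^ u - σ²(s, s + h) = 2 ^ (u - 1) (s ^ u + (s + h) ^ u) - (2s + h) ^ u`
is `2 ^ u` times the midpoint Jensen gap of the convex `x ↦ x ^ u`, hence nonnegative. Its
derivative in `s` is `2u` times the same gap for the concave `x ↦ x ^ (u - 1)`, hence nonpositive,
so the gap is largest at `s = 0`, where it equals `(2 ^ (u - 1) - 1) h ^ u`. The normalized
deviation is therefore bounded by `2 ^ (2H - 1) - 1` (so the supremum is finite) and attains this
value at `(s, h) = (0, δ)`; and `2 ^ (2H - 1) - 1` dominates the constant of the statement because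
`H (2H - 1) ≤ 1` and `3 ^ (2H - 2) ≤ 1`.
-/

theorem le_ciSup₂_ciSup₂_of_forall_le {α β γ : Type*} [ConditionallyCompleteLattice α]
    {f : β → γ → α} {A : Set β} {B : Set γ} {M : α} (hM : ∀ s ∈ A, ∀ t ∈ B, f s t ≤ M)
    {a : β} {b : γ} (ha : a ∈ A) (hb : b ∈ B) :
    f a b ≤ ⨆ s ∈ A, ⨆ t ∈ B, f s t := by
  have hbdd : ∀ s ∈ A, BddAbove (⋃ t, range fun _ : t ∈ B => f s t) := by
    refine fun s hs => ⟨M, ?_⟩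
    simp only [mem_upperBounds, mem_iUnion, mem_range]
    rintro _ ⟨t, ht, rfl⟩
    exact hM s hs t ht
  refine (le_ciSup₂ (hbdd a ha) b hb).trans (le_ciSup₂ (f := fun s _ => ⨆ t ∈ B, f s t) ?_ a ha)
  refine ⟨M ⊔ sSup ∅, ?_⟩
  simp only [mem_upperBounds, mem_iUnion, mem_range]
  rintro _ ⟨s, hs, rfl⟩
  have : Nonempty γ := ⟨b⟩
  refine ciSup_le fun t => ?_
  by_cases ht : t ∈ B
  · rw [ciSup_pos ht]
    exact (hM s hs t ht).trans le_sup_left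
  · have : IsEmpty (t ∈ B) := ⟨ht⟩
    exact (iSup_of_empty' _).trans_le le_sup_right

noncomputable def jensenGap (u x y : ℝ) : ℝ :=
  2 ^ (u - 1) * (x ^ u + y ^ u) - (x + y) ^ u

theorem jensenGap_eq {u x y : ℝ} (hx : 0 ≤ x) (hy : 0 ≤ y) :
    jensenGap u x y =
      2 ^ u * ((1/2 : ℝ) * x ^ u + 1/2 * y ^ u - ((1/2 : ℝ) * x + 1/2 * y) ^ u) := by
  have h2 : (2 : ℝ) ^ u = 2 ^ (u - 1) * 2 := by
    rw [← rpow_add_one two_ne_zero, sub_add_cancel]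
  rw [jensenGap, show (1/2 : ℝ) * x + 1/2 * y = (x + y) / 2 by ring,
    div_rpow (by positivity) zero_le_two, h2]
  field_simp

theorem jensenGap_nonneg {u x y : ℝ} (hu : 1 ≤ u) (hx : 0 ≤ x) (hy : 0 ≤ y) :
    0 ≤ jensenGap u x y := by
  have := (convexOn_rpow hu).2 (mem_Ici.2 hx) (mem_Ici.2 hy) (by norm_num : (0:ℝ) ≤ 1/2)
    (by norm_num : (0:ℝ) ≤ 1/2) (by norm_num)
  simp only [smul_eq_mul] at this
  rw [jensenGap_eq hx hy]
  exact mul_nonneg (by positivity) (sub_nonneg.2 this)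

theorem jensenGap_nonpos {p x y : ℝ} (hp₀ : 0 ≤ p) (hp₁ : p ≤ 1) (hx : 0 ≤ x) (hy : 0 ≤ y) :
    jensenGap p x y ≤ 0 := by
  have := (concaveOn_rpow hp₀ hp₁).2 (mem_Ici.2 hx) (mem_Ici.2 hy) (by norm_num : (0:ℝ) ≤ 1/2)
    (by norm_num : (0:ℝ) ≤ 1/2) (by norm_num)
  simp only [smul_eq_mul] at this
  rw [jensenGap_eq hx hy]
  exact mul_nonpos_of_nonneg_of_nonpos (by positivity) (sub_nonpos.2 this)

theorem hasDerivAt_jensenGap_add {u : ℝ} (hu : 1 ≤ u) (h s : ℝ) :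
    HasDerivAt (fun s => jensenGap u s (s + h)) (2 * u * jensenGap (u - 1) s (s + h)) s := by
  have hs : HasDerivAt (fun s : ℝ => s ^ u) (1 * u * s ^ (u - 1)) s :=
    (hasDerivAt_id' s).rpow_const (Or.inr hu)
  have hsh : HasDerivAt (fun s : ℝ => (s + h) ^ u) (1 * u * (s + h) ^ (u - 1)) s :=
    ((hasDerivAt_id' s).add_const h).rpow_const (Or.inr hu)
  have h2sh : HasDerivAt (fun s : ℝ => (s + (s + h)) ^ u)
      ((1 + 1) * u * (s + (s + h)) ^ (u - 1)) s :=
    ((hasDerivAt_id' s).add ((hasDerivAt_id' s).add_const h)).rpow_const (Or.inr hu)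
  refine (((hs.add hsh).const_mul (2 ^ (u - 1) : ℝ)).sub h2sh).congr_deriv ?_
  rw [jensenGap, show (2 : ℝ) ^ (u - 1) = 2 ^ (u - 1 - 1) * 2 by
    rw [← rpow_add_one two_ne_zero, sub_add_cancel]]
  ring

theorem antitoneOn_jensenGap_add {u h : ℝ} (hu₁ : 1 ≤ u) (hu₂ : u ≤ 2) (hh : 0 ≤ h) :
    AntitoneOn (fun s => jensenGap u s (s + h)) (Ici 0) := by
  have hderiv := hasDerivAt_jensenGap_add hu₁ h
  refine antitoneOn_of_hasDerivWithinAt_nonpos (convex_Ici 0)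
    (fun s _ => (hderiv s).continuousAt.continuousWithinAt)
    (fun s _ => (hderiv s).hasDerivWithinAt) fun s hs => ?_
  have hs : 0 < s := by rwa [interior_Ici] at hs
  exact mul_nonpos_of_nonneg_of_nonpos (by positivity)
    (jensenGap_nonpos (by linarith) (by linarith) hs.le (by positivity))

theorem jensenGap_add_le {u s h : ℝ} (hu₁ : 1 ≤ u) (hu₂ : u ≤ 2) (hs : 0 ≤ s) (hh : 0 ≤ h) :
    jensenGap u s (s + h) ≤ (2 ^ (u - 1) - 1) * h ^ u := by
  calc jensenGap u s (s + h) ≤ jensenGap u 0 (0 + h) :=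
        antitoneOn_jensenGap_add hu₁ hu₂ hh self_mem_Ici hs hs
    _ = (2 ^ (u - 1) - 1) * h ^ u := by
        simp only [jensenGap, zero_rpow (by positivity : u ≠ 0), zero_add]
        ring

theorem sigma2subfBm_add_sub_rpow (H s : ℝ) {h : ℝ} (hh : 0 ≤ h) :
    sigma2subfBm H s (s + h) - h ^ (2 * H) = -jensenGap (2 * H) s (s + h) := by
  rw [sigma2subfBm, jensenGap, add_sub_cancel_left, abs_of_nonneg hh]
  ring

theorem rpow_neg_mul_abs_sigma2subfBm_add_sub_rpow {H s h : ℝ} (hH : 1 / 2 ≤ H) (hs : 0 ≤ s)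
    (hh : 0 < h) :
    h ^ (-(2 * H)) * |sigma2subfBm H s (s + h) - h ^ (2 * H)|
      = jensenGap (2 * H) s (s + h) / h ^ (2 * H) := by
  rw [sigma2subfBm_add_sub_rpow H s hh.le, abs_neg,
    abs_of_nonneg (jensenGap_nonneg (by linarith) hs (by linarith)), rpow_neg hh.le,
    inv_mul_eq_div]

theorem subfBm_normalized_deviation_le {H s h : ℝ} (hH₁ : 1 / 2 ≤ H) (hH₂ : H ≤ 1) (hs : 0 ≤ s)
    (hh : 0 < h) :
    h ^ (-(2 * H)) * |sigma2subfBm H s (s + h) - h ^ (2 * H)| ≤ 2 ^ (2 * H - 1) - 1 := by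
  rw [rpow_neg_mul_abs_sigma2subfBm_add_sub_rpow hH₁ hs hh, div_le_iff₀ (by positivity)]
  exact jensenGap_add_le (by linarith) (by linarith) hs hh.le

theorem subfBm_normalized_deviation_zero {H h : ℝ} (hH : 1 / 2 ≤ H) (hh : 0 < h) :
    h ^ (-(2 * H)) * |sigma2subfBm H 0 (0 + h) - h ^ (2 * H)| = 2 ^ (2 * H - 1) - 1 := by
  rw [rpow_neg_mul_abs_sigma2subfBm_add_sub_rpow hH le_rfl hh]
  simp only [jensenGap, zero_rpow (by positivity : 2 * H ≠ 0), zero_add]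
  field_simp

theorem subfBm_cutoff_const_le {H : ℝ} (hH₁ : 1 / 2 ≤ H) (hH₂ : H ≤ 1) :
    H * (2 * H - 1) * (2 ^ (2 * H - 1) - 1) * 3 ^ (2 * H - 2) ≤ 2 ^ (2 * H - 1) - 1 := by
  have h2 : 0 ≤ (2 : ℝ) ^ (2 * H - 1) - 1 :=
    sub_nonneg.2 (one_le_rpow one_le_two (by linarith))
  have h3 : (3 : ℝ) ^ (2 * H - 2) ≤ 1 := rpow_le_one_of_one_le_of_nonpos (by norm_num) (by linarith)
  have hH : H * (2 * H - 1) ≤ 1 := by nlinarith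
  calc H * (2 * H - 1) * (2 ^ (2 * H - 1) - 1) * 3 ^ (2 * H - 2)
      ≤ 1 * (2 ^ (2 * H - 1) - 1) * 1 := by gcongr
    _ = 2 ^ (2 * H - 1) - 1 := by ring

theorem subfBm_C2_cutoff_necessary_general (H T : ℝ) (hH : H ∈ Set.Ioo (1/2 : ℝ) 1)
    (δ : ℝ) (hδ : 0 < δ) (hδT : δ ≤ T / 2) :
    H * (2*H - 1) * (2 ^ (2*H - 1) - 1) * 3 ^ (2*H - 2)
      ≤ ⨆ s ∈ Icc (0:ℝ) (T - δ), ⨆ h ∈ Ioc (0:ℝ) δ,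
          h ^ (-(2*H)) * |sigma2subfBm H s (s + h) - h ^ (2*H)| := by
  obtain ⟨hH₁, hH₂⟩ := hH
  calc H * (2*H - 1) * (2 ^ (2*H - 1) - 1) * 3 ^ (2*H - 2) ≤ 2 ^ (2 * H - 1) - 1 :=
        subfBm_cutoff_const_le hH₁.le hH₂.le
    _ = δ ^ (-(2 * H)) * |sigma2subfBm H 0 (0 + δ) - δ ^ (2 * H)| :=
        (subfBm_normalized_deviation_zero hH₁.le hδ).symm
    _ ≤ _ := le_ciSup₂_ciSup₂_of_forall_le
        (f := fun s h => h ^ (-(2 * H)) * |sigma2subfBm H s (s + h) - h ^ (2 * H)|)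
        (fun s hs h hh => subfBm_normalized_deviation_le hH₁.le hH₂.le hs.1 hh.1)
        (⟨le_rfl, by linarith⟩ : (0 : ℝ) ∈ Icc 0 (T - δ)) (⟨hδ, le_rfl⟩ : δ ∈ Ioc 0 δ)

/-- For `H ∈ (1/2,1)` the normalized deviation of the incremental
variance of sub-fractional Brownian motion from `h^{2H}`, taken over all
`s ∈ [0, T−δ]` and `0 < h ≤ δ`, is bounded below by a positive constant;
hence in condition (C2) the lower cutoff `φ(δ)` cannot be replaced by `0`. -/
theorem subfBm_C2_cutoff_necessary (H T : ℝ) (hH : H ∈ Set.Ioo (1/2 : ℝ) 1) (hT : 0 < T)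
    (δ : ℝ) (hδ : 0 < δ) (hδT : δ ≤ T / 2) :
    H * (2*H - 1) * (2 ^ (2*H - 1) - 1) * 3 ^ (2*H - 2)
      ≤ ⨆ s ∈ Icc (0:ℝ) (T - δ), ⨆ h ∈ Ioc (0:ℝ) δ,
          h ^ (-(2*H)) * |sigma2subfBm H s (s + h) - h ^ (2*H)| :=
  subfBm_C2_cutoff_necessary_general H T hH δ hδ hδT
end
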